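/- arXiv:1505.07633 — 2 statements merged into one kernel-verified Lean document; each statement's English description precedes it below -/
import Mathlib

section
/- Let K be a field with a nontrivial Krull valuation v into a linearly ordered abelian group Γ, and let A(x) = Σ_{i=0}^n a_i x^i ∈ K[x] be a polynomial of degree n. If at least one of the two polynomials U(A(x)) = A(x − a_{n−1}/(n a_n)) or L(A(x)) = Σ_{i=0}^n a_i x^i (1 − (a_1/(n a_0))x)^{n−i} is an Eisenstein–Dumas polynomial at v, then A(x) is irreducible in K[x]. -/
open Polynomial

/-- A Krull valuation on a field `K` with values in `Γ ∪ {∞}` (here `WithTop Γ`), where `Γ` is a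
linearly ordered abelian group: `v a = ∞ ↔ a = 0`, `v (a*b) = v a + v b`, and
`v (a+b) ≥ min (v a) (v b)`. -/
structure KrullValuation (K : Type*) [Field K] (Γ : Type*) [AddCommGroup Γ] [LinearOrder Γ] [IsOrderedAddMonoid Γ] where
  v : K → WithTop Γ
  eq_top_iff : ∀ a : K, v a = ⊤ ↔ a = 0
  map_mul : ∀ a b : K, v (a * b) = v a + v b
  min_le_add : ∀ a b : K, min (v a) (v b) ≤ v (a + b)

variable {K : Type*} [Field K] {Γ : Type*} [AddCommGroup Γ] [LinearOrder Γ] [IsOrderedAddMonoid Γ]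

/-- The valuation `w` is nontrivial. -/
def KrullValuation.IsNontrivial (w : KrullValuation K Γ) : Prop :=
  ∃ a : K, a ≠ 0 ∧ w.v a ≠ 0

/-- `A` is an Eisenstein–Dumas polynomial of degree `n` at the valuation `w`:
(D0) `a₀ * aₙ ≠ 0`, (D1) `v(a₀) − v(aₙ) ∉ kΓ` for every integer `k > 1` dividing `n`
(stated as: `v(a₀) ≠ v(aₙ) + k•g` for all `g ∈ Γ`),
(D2) `n·v(aᵢ) ≥ (n−i)·v(a₀) + i·v(aₙ)` for `0 ≤ i ≤ n`. -/
def IsEisensteinDumas (w : KrullValuation K Γ) (n : ℕ) (A : K[X]) : Prop :=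
  A.natDegree = n ∧
  A.coeff 0 * A.coeff n ≠ 0 ∧
  (∀ k : ℕ, 1 < k → k ∣ n → ∀ g : Γ,
    w.v (A.coeff 0) ≠ w.v (A.coeff n) + ((k • g : Γ) : WithTop Γ)) ∧
  (∀ i ≤ n, (n - i) • w.v (A.coeff 0) + i • w.v (A.coeff n) ≤ n • w.v (A.coeff i))

/-- For `A = Σ aᵢ xⁱ` of degree `n`, `U(A(x)) := A(x − a_{n−1}/(n·aₙ))`. -/
noncomputable def Upoly (n : ℕ) (A : K[X]) : K[X] :=
  A.comp (X - C (A.coeff (n - 1) / ((n : K) * A.coeff n)))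

/-- For `A = Σ aᵢ xⁱ` of degree `n`,
`L(A(x)) := Σ_{i=0}^n aᵢ xⁱ (1 − (a₁/(n·a₀))x)^{n−i}`. -/
noncomputable def Lpoly (n : ℕ) (A : K[X]) : K[X] :=
  ∑ i ∈ Finset.range (n + 1),
    C (A.coeff i) * X ^ i * (1 - C (A.coeff 1 / ((n : K) * A.coeff 0)) * X) ^ (n - i)


/-!
Weight the `i`-th coefficient of `P` by `n • v(aᵢ) + i • μ`, where `μ = v(a₀) - v(aₙ)`; the
factor `n` spares us a division in `Γ`, and this weighted valuation is minimal exactly where the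
Newton polygon touches the line of slope `-μ / n`. For an Eisenstein–Dumas polynomial, (D2) says
it is minimal at `0` and at `n`. By Gauss's lemma, the first minimizing indices of two factors add
up to a minimizing index of the product, so a factorization `P = B * C` with `0 < deg B = r < n`
makes the weighted valuation of `B` minimal at `0` and at `r`: then `r • μ ∈ nΓ`, and Bézout
puts `μ` in `(n / gcd r n) Γ`, contradicting (D1).

`U(A)` is the image of `A` under the ring automorphism `x ↦ x - c` of `K[x]`. `L(A)` is
`(1 - c x)ⁿ A(x / (1 - c x))`, the degree-`n` homogenization of `A` evaluated at `(x, 1 - c x)`;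
this is multiplicative and does not raise degrees, so with `deg L(A) = n` a factorization of `A`
into factors of positive degree gives one of `L(A)`.
-/

theorem exists_nsmul_eq_of_nsmul_eq_nsmul {G : Type*} [AddCommGroup G] [IsAddTorsionFree G]
    {r n : ℕ} (hr : 0 < r) (hrn : r < n) {μ g : G} (h : r • μ = n • g) :
    ∃ k, 1 < k ∧ k ∣ n ∧ ∃ η : G, μ = k • η := by
  set d := r.gcd n
  have hd : d ≠ 0 := (Nat.gcd_pos_of_pos_left n hr).ne'
  have hdn : d * (n / d) = n := Nat.mul_div_cancel' (Nat.gcd_dvd_right r n)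
  refine ⟨n / d, ?_, Nat.div_dvd_of_dvd (Nat.gcd_dvd_right r n),
    r.gcdA n • g + r.gcdB n • μ, IsAddTorsionFree.nsmul_right_injective hd ?_⟩
  · have : d ≤ r := Nat.gcd_le_left n hr
    exact (Nat.lt_div_iff_mul_lt' (Nat.gcd_dvd_right r n) 1).2 (by omega)
  · -- Bézout: `d = r a + n b`, so `d • μ = a • r • μ + b • n • μ = n • (a • g + b • μ)`.
    dsimp only
    rw [smul_smul, hdn, ← natCast_zsmul, Nat.gcd_eq_gcd_ab, add_smul, mul_comm, mul_smul,
      natCast_zsmul, h, mul_smul, natCast_zsmul, smul_add, smul_comm _ n g]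

theorem WithTop.eq_of_add_eq_add_of_le {a b c d : WithTop Γ} (hab : a ≤ b) (hcd : c ≤ d)
    (h : a + c = b + d) (hc : c ≠ ⊤) : a = b :=
  hab.eq_of_not_lt fun hlt => (WithTop.add_lt_add_of_lt_of_le hc hlt hcd).ne h

def IsFirstMin {α : Type*} [LinearOrder α] (f : ℕ → α) (i : ℕ) : Prop :=
  (∀ p, f i ≤ f p) ∧ ∀ p < i, f i < f p

theorem exists_isFirstMin {α : Type*} [LinearOrder α] {f : ℕ → α}
    (h : ∃ i, ∀ p, f i ≤ f p) : ∃ i, IsFirstMin f i := by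
  classical
  exact ⟨Nat.find h, Nat.find_spec h, fun p hp => lt_of_not_ge fun hle =>
    Nat.find_min h hp fun q => hle.trans (Nat.find_spec h q)⟩

theorem Polynomial.irreducible_of_forall_mul_natDegree_eq_zero {F : Type*} [Field F] {P : F[X]}
    (hP : 0 < P.natDegree) (h : ∀ B C : F[X], P = B * C → B.natDegree = 0 ∨ C.natDegree = 0) :
    Irreducible P := by
  refine ⟨not_isUnit_of_natDegree_pos P hP, fun B C hBC => ?_⟩
  have hB : B ≠ 0 := by rintro rfl; simp [hBC] at hP
  have hC : C ≠ 0 := by rintro rfl; simp [hBC] at hP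
  refine (h B C hBC).imp (fun h0 => ?_) fun h0 => ?_ <;>
    exact isUnit_iff_degree_eq_zero.2 (by rw [degree_eq_natDegree ‹_›, h0]; rfl)

theorem Polynomial.irreducible_comp_X_sub_C_iff {R : Type*} [CommRing R] (c : R) {A : R[X]} :
    Irreducible (A.comp (X - C c)) ↔ Irreducible A := by
  rw [sub_eq_add_neg, ← C_neg, ← taylor_apply]
  exact MulEquiv.irreducible_iff (taylorEquiv (-c))

namespace KrullValuation

variable (w : KrullValuation K Γ)

theorem v_one : w.v 1 = 0 := by
  have h := w.map_mul 1 1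
  rw [one_mul] at h
  lift w.v 1 to Γ using fun h1 => one_ne_zero ((w.eq_top_iff 1).1 h1) with γ
  norm_cast at h ⊢
  exact left_eq_add.1 h

def toAddValuation : AddValuation K (WithTop Γ) :=
  AddValuation.of w.v ((w.eq_top_iff 0).2 rfl) w.v_one w.min_le_add w.map_mul

@[simp]
theorem toAddValuation_apply (a : K) : w.toAddValuation a = w.v a := rfl

end KrullValuation

namespace AddValuation

variable {R Γ₀ : Type*} [Ring R] [LinearOrderedAddCommMonoidWithTop Γ₀]

def nsmul (v : AddValuation R Γ₀) {n : ℕ} (hn : n ≠ 0) : AddValuation R Γ₀ :=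
  v.map (nsmulAddMonoidHom n)
    (by obtain ⟨m, rfl⟩ := Nat.exists_eq_succ_of_ne_zero hn; simp [succ_nsmul])
    fun _ _ h => nsmul_le_nsmul_right h n

@[simp]
theorem nsmul_apply (v : AddValuation R Γ₀) {n : ℕ} (hn : n ≠ 0) (r : R) :
    v.nsmul hn r = n • v r := rfl

end AddValuation

section WeightedCoeffVal

open Finset.HasAntidiagonal

variable {R : Type*} [CommRing R] (v : AddValuation R (WithTop Γ)) (μ : Γ)

def weightedCoeffVal (Q : R[X]) (i : ℕ) : WithTop Γ :=
  v (Q.coeff i) + ((i • μ : Γ) : WithTop Γ)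

theorem map_coeff_mul_coeff_add_nsmul (B C : R[X]) (p q : ℕ) :
    v (B.coeff p * C.coeff q) + (((p + q) • μ : Γ) : WithTop Γ) =
      weightedCoeffVal v μ B p + weightedCoeffVal v μ C q := by
  simp only [weightedCoeffVal, v.map_mul, add_nsmul, WithTop.coe_add]
  ac_rfl

theorem weightedCoeffVal_mul_zero (B C : R[X]) :
    weightedCoeffVal v μ (B * C) 0 = weightedCoeffVal v μ B 0 + weightedCoeffVal v μ C 0 := by
  rw [← map_coeff_mul_coeff_add_nsmul, weightedCoeffVal, mul_coeff_zero]

theorem weightedCoeffVal_mul_natDegree_add_natDegree (B C : R[X]) :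
    weightedCoeffVal v μ (B * C) (B.natDegree + C.natDegree) =
      weightedCoeffVal v μ B B.natDegree + weightedCoeffVal v μ C C.natDegree := by
  rw [← map_coeff_mul_coeff_add_nsmul, weightedCoeffVal, coeff_mul_degree_add_degree]
  rfl

theorem exists_forall_weightedCoeffVal_le (Q : R[X]) :
    ∃ i, ∀ p, weightedCoeffVal v μ Q i ≤ weightedCoeffVal v μ Q p := by
  obtain ⟨i, -, hi⟩ := (Finset.range (Q.natDegree + 1)).exists_min_image
    (weightedCoeffVal v μ Q) ⟨0, by simp⟩
  refine ⟨i, fun p => ?_⟩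
  rcases le_or_gt p Q.natDegree with hp | hp
  · exact hi p (Finset.mem_range_succ_iff.2 hp)
  · simp [weightedCoeffVal, coeff_eq_zero_of_natDegree_lt hp]

/-- Gauss's lemma for the weighted valuation. -/
theorem weightedCoeffVal_mul_add_of_isFirstMin {B C : R[X]} {i j : ℕ}
    (hB : IsFirstMin (weightedCoeffVal v μ B) i) (hC : IsFirstMin (weightedCoeffVal v μ C) j)
    (hBi : weightedCoeffVal v μ B i ≠ ⊤) (hCj : weightedCoeffVal v μ C j ≠ ⊤) :
    weightedCoeffVal v μ (B * C) (i + j) =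
      weightedCoeffVal v μ B i + weightedCoeffVal v μ C j := by
  classical
  have hμ : (((i + j) • μ : Γ) : WithTop Γ) ≠ ⊤ := WithTop.coe_ne_top
  have hdom : v (B.coeff i * C.coeff j) ≠ ⊤ := by
    have := WithTop.add_ne_top.2 ⟨hBi, hCj⟩
    rw [← map_coeff_mul_coeff_add_nsmul] at this
    exact (WithTop.add_ne_top.1 this).1
  have hrest : v (B.coeff i * C.coeff j) <
      v (∑ x ∈ (antidiagonal (i + j)).erase (i, j), B.coeff x.1 * C.coeff x.2) := by
    refine v.map_lt_sum hdom fun x hx => ?_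
    obtain ⟨hne, hx⟩ := Finset.mem_erase.1 hx
    rw [mem_antidiagonal] at hx
    rw [← WithTop.add_lt_add_iff_right hμ, map_coeff_mul_coeff_add_nsmul, ← hx,
      map_coeff_mul_coeff_add_nsmul]
    have : x.1 < i ∨ x.2 < j := by
      by_contra! h
      exact hne (Prod.ext (by omega) (by omega))
    rcases this with h | h
    · exact WithTop.add_lt_add_of_lt_of_le hCj (hB.2 _ h) (hC.1 _)
    · exact WithTop.add_lt_add_of_le_of_lt hBi (hB.1 _) (hC.2 _ h)
  rw [weightedCoeffVal, coeff_mul,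
    ← Finset.add_sum_erase _ _ (a := (i, j)) (mem_antidiagonal.2 rfl),
    v.map_add_eq_of_lt_left hrest, map_coeff_mul_coeff_add_nsmul]

theorem weightedCoeffVal_zero_le_of_mul {B C : R[X]}
    (h0 : weightedCoeffVal v μ (B * C) 0 ≠ ⊤)
    (hmin : ∀ p, weightedCoeffVal v μ (B * C) 0 ≤ weightedCoeffVal v μ (B * C) p) (p : ℕ) :
    weightedCoeffVal v μ B 0 ≤ weightedCoeffVal v μ B p := by
  obtain ⟨i, hi⟩ := exists_isFirstMin (exists_forall_weightedCoeffVal_le v μ B)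
  obtain ⟨j, hj⟩ := exists_isFirstMin (exists_forall_weightedCoeffVal_le v μ C)
  rw [weightedCoeffVal_mul_zero] at h0 hmin
  have hCj := ne_top_of_le_ne_top (WithTop.add_ne_top.1 h0).2 (hj.1 0)
  have hcorner := weightedCoeffVal_mul_add_of_isFirstMin v μ hi hj
    (ne_top_of_le_ne_top (WithTop.add_ne_top.1 h0).1 (hi.1 0)) hCj
  have hi0 : weightedCoeffVal v μ B i = weightedCoeffVal v μ B 0 :=
    WithTop.eq_of_add_eq_add_of_le (hi.1 0) (hj.1 0)
      ((add_le_add (hi.1 0) (hj.1 0)).antisymm (hcorner ▸ hmin (i + j))) hCj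
  exact hi0 ▸ hi.1 p

theorem weightedCoeffVal_zero_eq_natDegree_of_mul {B C : R[X]}
    (h0 : weightedCoeffVal v μ (B * C) 0 ≠ ⊤)
    (hmin : ∀ p, weightedCoeffVal v μ (B * C) 0 ≤ weightedCoeffVal v μ (B * C) p)
    (hlast : weightedCoeffVal v μ (B * C) (B.natDegree + C.natDegree) =
      weightedCoeffVal v μ (B * C) 0) :
    weightedCoeffVal v μ B 0 = weightedCoeffVal v μ B B.natDegree := by
  have hB0 := weightedCoeffVal_zero_le_of_mul v μ h0 hmin
  have hC0 := weightedCoeffVal_zero_le_of_mul v μ (mul_comm B C ▸ h0) (mul_comm B C ▸ hmin)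
  rw [weightedCoeffVal_mul_natDegree_add_natDegree, weightedCoeffVal_mul_zero] at hlast
  rw [weightedCoeffVal_mul_zero] at h0
  exact WithTop.eq_of_add_eq_add_of_le (hB0 _) (hC0 _) hlast.symm (WithTop.add_ne_top.1 h0).2

end WeightedCoeffVal

namespace IsEisensteinDumas

variable {w : KrullValuation K Γ} {n : ℕ} {P : K[X]}

theorem ne_zero (hP : IsEisensteinDumas w n P) : n ≠ 0 := by
  rintro rfl
  exact hP.2.2.1 2 one_lt_two (dvd_zero 2) 0 (by simp)

theorem weightedCoeffVal_zero (hP : IsEisensteinDumas w n P) {α₀ αₙ : Γ}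
    (h₀ : w.v (P.coeff 0) = α₀) :
    weightedCoeffVal (w.toAddValuation.nsmul hP.ne_zero) (α₀ - αₙ) P 0 =
      ((n • α₀ : Γ) : WithTop Γ) := by
  simp only [weightedCoeffVal, AddValuation.nsmul_apply, KrullValuation.toAddValuation_apply, h₀]
  norm_cast
  rw [zero_smul, add_zero]

theorem weightedCoeffVal_natDegree (hP : IsEisensteinDumas w n P) {α₀ αₙ : Γ}
    (hₙ : w.v (P.coeff n) = αₙ) :
    weightedCoeffVal (w.toAddValuation.nsmul hP.ne_zero) (α₀ - αₙ) P n =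
      ((n • α₀ : Γ) : WithTop Γ) := by
  simp only [weightedCoeffVal, AddValuation.nsmul_apply, KrullValuation.toAddValuation_apply, hₙ]
  norm_cast
  rw [nsmul_sub, add_sub_cancel]

theorem weightedCoeffVal_zero_le (hP : IsEisensteinDumas w n P) {α₀ αₙ : Γ}
    (h₀ : w.v (P.coeff 0) = α₀) (hₙ : w.v (P.coeff n) = αₙ) (p : ℕ) :
    weightedCoeffVal (w.toAddValuation.nsmul hP.ne_zero) (α₀ - αₙ) P 0 ≤
      weightedCoeffVal (w.toAddValuation.nsmul hP.ne_zero) (α₀ - αₙ) P p := by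
  rcases le_or_gt p n with hp | hp
  · have hsplit : (n • α₀ : Γ) = (n - p) • α₀ + p • αₙ + p • (α₀ - αₙ) := by
      rw [nsmul_sub, add_add_sub_cancel, ← add_nsmul, Nat.sub_add_cancel hp]
    calc weightedCoeffVal (w.toAddValuation.nsmul hP.ne_zero) (α₀ - αₙ) P 0
        = (n - p) • w.v (P.coeff 0) + p • w.v (P.coeff n) +
            ((p • (α₀ - αₙ) : Γ) : WithTop Γ) := by
          rw [hP.weightedCoeffVal_zero h₀, h₀, hₙ, hsplit]
          norm_cast
      _ ≤ n • w.v (P.coeff p) + ((p • (α₀ - αₙ) : Γ) : WithTop Γ) := by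
          gcongr
          exact hP.2.2.2 p hp
  · simp [weightedCoeffVal, coeff_eq_zero_of_natDegree_lt (hP.1 ▸ hp)]

theorem irreducible (hP : IsEisensteinDumas w n P) : Irreducible P := by
  have hn := hP.ne_zero
  have ha₀ := left_ne_zero_of_mul hP.2.1
  obtain ⟨α₀, hα₀⟩ := WithTop.ne_top_iff_exists.1 (mt (w.eq_top_iff _).1 ha₀)
  obtain ⟨αₙ, hαₙ⟩ :=
    WithTop.ne_top_iff_exists.1 (mt (w.eq_top_iff _).1 (right_ne_zero_of_mul hP.2.1))
  refine irreducible_of_forall_mul_natDegree_eq_zero (hP.1 ▸ Nat.pos_of_ne_zero hn)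
    fun B C hBC => ?_
  subst hBC
  by_contra! hpos
  have hB : B ≠ 0 := by rintro rfl; simp at ha₀
  have hC : C ≠ 0 := by rintro rfl; simp at ha₀
  have hrs : B.natDegree + C.natDegree = n := (natDegree_mul hB hC).symm.trans hP.1
  have hflat := weightedCoeffVal_zero_eq_natDegree_of_mul (w.toAddValuation.nsmul hn) (α₀ - αₙ)
    (hP.weightedCoeffVal_zero hα₀.symm ▸ WithTop.coe_ne_top)
    (hP.weightedCoeffVal_zero_le hα₀.symm hαₙ.symm)
    (hrs ▸ (hP.weightedCoeffVal_natDegree hαₙ.symm).trans (hP.weightedCoeffVal_zero hα₀.symm).symm)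
  obtain ⟨β₀, hβ₀⟩ := WithTop.ne_top_iff_exists.1
    (mt (w.eq_top_iff _).1 (left_ne_zero_of_mul (mul_coeff_zero B C ▸ ha₀)))
  obtain ⟨βᵣ, hβᵣ⟩ := WithTop.ne_top_iff_exists.1
    (mt (w.eq_top_iff _).1 (leadingCoeff_ne_zero.2 hB))
  have hslope : B.natDegree • (α₀ - αₙ) = n • (β₀ - βᵣ) := by
    simp only [weightedCoeffVal, AddValuation.nsmul_apply, KrullValuation.toAddValuation_apply,
      coeff_natDegree, ← hβ₀, ← hβᵣ] at hflat
    norm_cast at hflat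
    rw [zero_smul, add_zero] at hflat
    rw [nsmul_sub β₀ βᵣ n, hflat, add_sub_cancel_left]
  obtain ⟨k, hk, hkn, η, hη⟩ :=
    exists_nsmul_eq_of_nsmul_eq_nsmul (Nat.pos_of_ne_zero hpos.1) (by omega) hslope
  exact hP.2.2.1 k hk hkn η (by rw [← hα₀, ← hαₙ, ← WithTop.coe_add, ← hη, add_sub_cancel])

end IsEisensteinDumas

section MoebiusSubst

variable {R : Type*} [CommRing R]

/-- `(1 - c X) ^ m * P (X / (1 - c X))`. -/
noncomputable def moebiusSubst (c : R) (m : ℕ) (P : R[X]) : R[X] :=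
  MvPolynomial.aeval ![X, 1 - C c * X] (P.homogenize m)

theorem moebiusSubst_eq_sum (c : R) (m : ℕ) (P : R[X]) :
    moebiusSubst c m P =
      ∑ i ∈ Finset.range (m + 1), C (P.coeff i) * X ^ i * (1 - C c * X) ^ (m - i) := by
  rw [moebiusSubst, homogenize, map_sum, Finset.Nat.sum_antidiagonal_eq_sum_range_succ_mk]
  refine Finset.sum_congr rfl fun i _ => ?_
  simp [MvPolynomial.aeval_monomial, Finsupp.prod_fintype, mul_assoc]

theorem moebiusSubst_mul (c : R) {B D : R[X]} {r s : ℕ} (hB : B.natDegree ≤ r)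
    (hD : D.natDegree ≤ s) :
    moebiusSubst c (r + s) (B * D) = moebiusSubst c r B * moebiusSubst c s D := by
  rw [moebiusSubst, homogenize_mul _ _ hB hD, map_mul, moebiusSubst, moebiusSubst]

theorem natDegree_moebiusSubst_le (c : R) (m : ℕ) (P : R[X]) :
    (moebiusSubst c m P).natDegree ≤ m := by
  rw [moebiusSubst_eq_sum]
  refine natDegree_sum_le_of_forall_le _ _ fun i hi => ?_
  have := Finset.mem_range_succ_iff.1 hi
  compute_degree
  omega

end MoebiusSubst

theorem irreducible_of_irreducible_moebiusSubst {F : Type*} [Field F] {c : F} {n : ℕ} {A : F[X]}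
    (hA : A.natDegree = n) (hM : (moebiusSubst c n A).natDegree = n)
    (h : Irreducible (moebiusSubst c n A)) : Irreducible A := by
  have hn : 0 < n := by
    refine Nat.pos_of_ne_zero fun hn => h.not_isUnit ?_
    exact isUnit_iff_degree_eq_zero.2 (by rw [degree_eq_natDegree h.ne_zero, hM, hn]; rfl)
  refine irreducible_of_forall_mul_natDegree_eq_zero (hA ▸ hn) fun B D hBD => ?_
  subst hBD
  have hB : B ≠ 0 := by rintro rfl; simp at hA; omega
  have hD : D ≠ 0 := by rintro rfl; simp at hA; omega
  rw [natDegree_mul hB hD] at hA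
  subst hA
  rw [moebiusSubst_mul c le_rfl le_rfl] at h hM
  rw [natDegree_mul (left_ne_zero_of_mul h.ne_zero) (right_ne_zero_of_mul h.ne_zero)] at hM
  have hBle := natDegree_moebiusSubst_le c B.natDegree B
  have hDle := natDegree_moebiusSubst_le c D.natDegree D
  rcases h.isUnit_or_isUnit rfl with hu | hu <;>
  · have := natDegree_eq_zero_of_isUnit hu
    omega

theorem irreducible_of_UL_eisensteinDumas_general (w : KrullValuation K Γ)
    (n : ℕ) (A : K[X]) (hdeg : A.natDegree = n)
    (h : IsEisensteinDumas w n (Upoly n A) ∨ IsEisensteinDumas w n (Lpoly n A)) :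
    Irreducible A := by
  rcases h with hU | hL
  · exact (irreducible_comp_X_sub_C_iff _).1 hU.irreducible
  · rw [Lpoly, ← moebiusSubst_eq_sum] at hL
    exact irreducible_of_irreducible_moebiusSubst hdeg hL.1 hL.irreducible

/-- If `U(A(x))` or `L(A(x))` is an Eisenstein–Dumas polynomial at a nontrivial Krull valuation,
then `A(x)` is irreducible in `K[x]`. -/
theorem irreducible_of_UL_eisensteinDumas (w : KrullValuation K Γ) (hw : w.IsNontrivial)
    (n : ℕ) (A : K[X]) (hdeg : A.natDegree = n) (hA : A ≠ 0)
    (h : IsEisensteinDumas w n (Upoly n A) ∨ IsEisensteinDumas w n (Lpoly n A)) :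
    Irreducible A :=
  irreducible_of_UL_eisensteinDumas_general w n A hdeg h
end

section
/- Let K be a field with a nontrivial Krull valuation v into a linearly ordered abelian group Γ, and let A(x) = Σ_{i=0}^n a_i x^i ∈ K[x] have degree n. Then A satisfies conditions (D0), (D1), (D2) if and only if A satisfies (D0), (D1), and the strict condition (D2'): n·v(a_i) > (n−i)·v(a_0) + i·v(a_n) for all 1 ≤ i ≤ n−1. In particular, an Eisenstein–Dumas polynomial automatically satisfies the strict inequalities in its interior coefficients. -/
/-! If `n·v(aᵢ) = (n−i)·v(a₀) + i·v(aₙ)` for some `0 < i < n`, then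
`(n−i)(v(a₀)−v(aₙ)) = n(v(aᵢ)−v(aₙ))` in `Γ`. Cancelling `d = gcd(n, n−i)` (ordered groups are
torsion-free) and using Bézout for the coprime quotients shows `v(a₀)−v(aₙ) ∈ (n/d)Γ`, where
`1 < n/d` divides `n`; this contradicts (D1). So (D2) can only hold strictly in the interior, while
at `i = 0` and `i = n` it holds with equality. -/

open Polynomial

variable {K : Type*} [Field K] {Γ : Type*} [AddCommGroup Γ] [LinearOrder Γ] [IsOrderedAddMonoid Γ]

theorem IsCoprime.exists_eq_zsmul_of_zsmul_eq_zsmul {G : Type*} [AddCommGroup G] {a b : ℤ}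
    (hab : IsCoprime a b) {x y : G} (h : a • x = b • y) : ∃ g : G, x = b • g := by
  obtain ⟨u, v, huv⟩ := hab
  refine ⟨u • y + v • x, ?_⟩
  calc x = (u * a + v * b) • x := by rw [huv, one_smul]
    _ = b • (u • y + v • x) := by
      rw [smul_add, smul_comm b u, ← h, add_smul, mul_smul, mul_smul, smul_comm b v]

theorem exists_eq_nsmul_of_nsmul_eq_nsmul {G : Type*} [AddCommGroup G] [IsAddTorsionFree G]
    {m n : ℕ} (hn : 0 < n) {x y : G} (h : m • x = n • y) :
    ∃ g : G, x = (n / n.gcd m) • g := by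
  set d := n.gcd m
  have hd : 0 < d := Nat.gcd_pos_of_pos_left m hn
  have hcancel : (m / d) • x = (n / d) • y := by
    apply nsmul_right_injective hd.ne'
    dsimp only
    rw [smul_smul, smul_smul, Nat.mul_div_cancel' (Nat.gcd_dvd_right n m : d ∣ m),
      Nat.mul_div_cancel' (Nat.gcd_dvd_left n m : d ∣ n), h]
  have hcop : IsCoprime ((m / d : ℕ) : ℤ) ((n / d : ℕ) : ℤ) :=
    Nat.isCoprime_iff_coprime.mpr (Nat.coprime_div_gcd_div_gcd hd).symm
  obtain ⟨g, hg⟩ :=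
    hcop.exists_eq_zsmul_of_zsmul_eq_zsmul (by simpa only [natCast_zsmul] using hcancel)
  exact ⟨g, by rwa [natCast_zsmul] at hg⟩

theorem exists_eq_add_nsmul_of_nsmul_add_nsmul_eq {G : Type*} [AddCommGroup G]
    [IsAddTorsionFree G] {α β γ : G} {i n : ℕ} (hi : 0 < i) (hin : i < n)
    (h : (n - i) • α + i • β = n • γ) :
    ∃ k : ℕ, 1 < k ∧ k ∣ n ∧ ∃ g : G, α = β + k • g := by
  have hsub : (n - i) • (α - β) = n • (γ - β) := by
    rw [nsmul_sub, nsmul_sub, ← h, ← Nat.sub_add_cancel hin.le, add_nsmul, Nat.add_sub_cancel]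
    abel
  obtain ⟨g, hg⟩ := exists_eq_nsmul_of_nsmul_eq_nsmul (by omega) hsub
  refine ⟨n / n.gcd (n - i), ?_, Nat.div_dvd_of_dvd (Nat.gcd_dvd_left _ _), g, ?_⟩
  · have hgcd : n.gcd (n - i) < n :=
      (Nat.le_of_dvd (by omega) (Nat.gcd_dvd_right _ _)).trans_lt (by omega)
    exact (Nat.lt_div_iff_mul_lt' (Nat.gcd_dvd_left _ _) _).mpr (by simpa using hgcd)
  · rw [← hg]; abel

theorem KrullValuation.v_ne_top (w : KrullValuation K Γ) {a : K} (ha : a ≠ 0) : w.v a ≠ ⊤ :=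
  mt (w.eq_top_iff a).mp ha

theorem WithTop.nsmul_top {M : Type*} [AddMonoid M] {n : ℕ} (hn : n ≠ 0) :
    n • (⊤ : WithTop M) = ⊤ := by
  obtain ⟨k, rfl⟩ := Nat.exists_eq_succ_of_ne_zero hn
  rw [succ_nsmul, WithTop.add_top]

theorem nsmul_add_nsmul_ne_of_forall_ne_add_nsmul {x y : WithTop Γ} (hx : x ≠ ⊤) (hy : y ≠ ⊤)
    {n : ℕ} (hxy : ∀ k : ℕ, 1 < k → k ∣ n → ∀ g : Γ, x ≠ y + ((k • g : Γ) : WithTop Γ))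
    {i : ℕ} (hi : 0 < i) (hin : i < n) (z : WithTop Γ) :
    n • z ≠ (n - i) • x + i • y := by
  lift x to Γ using hx
  lift y to Γ using hy
  induction z using WithTop.recTopCoe with
  | top =>
    rw [WithTop.nsmul_top (by omega), ← WithTop.coe_nsmul, ← WithTop.coe_nsmul,
      ← WithTop.coe_add]
    exact WithTop.top_ne_coe
  | coe z =>
    simp only [← WithTop.coe_nsmul, ← WithTop.coe_add]
    intro h
    obtain ⟨k, hk, hkn, g, hg⟩ :=
      exists_eq_add_nsmul_of_nsmul_add_nsmul_eq hi hin (WithTop.coe_injective h).symm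
    exact hxy k hk hkn g (by rw [hg, WithTop.coe_add])

theorem eisensteinDumas_iff_strict_general (w : KrullValuation K Γ) (n : ℕ) (A : K[X]) :
    (A.coeff 0 * A.coeff n ≠ 0 ∧
     (∀ k : ℕ, 1 < k → k ∣ n → ∀ g : Γ,
       w.v (A.coeff 0) ≠ w.v (A.coeff n) + ((k • g : Γ) : WithTop Γ)) ∧
     (∀ i ≤ n, (n - i) • w.v (A.coeff 0) + i • w.v (A.coeff n) ≤ n • w.v (A.coeff i)))
    ↔
    (A.coeff 0 * A.coeff n ≠ 0 ∧
     (∀ k : ℕ, 1 < k → k ∣ n → ∀ g : Γ,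
       w.v (A.coeff 0) ≠ w.v (A.coeff n) + ((k • g : Γ) : WithTop Γ)) ∧
     (∀ i, 1 ≤ i → i ≤ n - 1 →
       (n - i) • w.v (A.coeff 0) + i • w.v (A.coeff n) < n • w.v (A.coeff i))) := by
  constructor
  · rintro ⟨h0, h1, h2⟩
    exact ⟨h0, h1, fun i hi1 hi2 =>
      (h2 i (by omega)).lt_of_ne' (nsmul_add_nsmul_ne_of_forall_ne_add_nsmul
        (w.v_ne_top (left_ne_zero_of_mul h0)) (w.v_ne_top (right_ne_zero_of_mul h0)) h1
        (by omega) (by omega) _)⟩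
  · rintro ⟨h0, h1, h2⟩
    refine ⟨h0, h1, fun i hin => ?_⟩
    rcases Nat.eq_zero_or_pos i with rfl | hi
    · simp
    rcases hin.lt_or_eq with hin | rfl
    · exact (h2 i hi (by omega)).le
    · simp

/-- For `A` of degree `n`, conditions (D0), (D1), (D2) together are equivalent to (D0), (D1)
and the strict condition (D2'): `n·v(aᵢ) > (n−i)·v(a₀) + i·v(aₙ)` for `1 ≤ i ≤ n−1`. -/
theorem eisensteinDumas_iff_strict (w : KrullValuation K Γ) (hw : w.IsNontrivial)
    (n : ℕ) (A : K[X]) (hdeg : A.natDegree = n) (hA : A ≠ 0) :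
    (A.coeff 0 * A.coeff n ≠ 0 ∧
     (∀ k : ℕ, 1 < k → k ∣ n → ∀ g : Γ,
       w.v (A.coeff 0) ≠ w.v (A.coeff n) + ((k • g : Γ) : WithTop Γ)) ∧
     (∀ i ≤ n, (n - i) • w.v (A.coeff 0) + i • w.v (A.coeff n) ≤ n • w.v (A.coeff i)))
    ↔
    (A.coeff 0 * A.coeff n ≠ 0 ∧
     (∀ k : ℕ, 1 < k → k ∣ n → ∀ g : Γ,
       w.v (A.coeff 0) ≠ w.v (A.coeff n) + ((k • g : Γ) : WithTop Γ)) ∧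
     (∀ i, 1 ≤ i → i ≤ n - 1 →
       (n - i) • w.v (A.coeff 0) + i • w.v (A.coeff n) < n • w.v (A.coeff i))) :=
  eisensteinDumas_iff_strict_general w n A
end
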